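/- arXiv:2409.20513 — 7 statements merged into one kernel-verified Lean document; each statement's English description precedes it below -/
import Mathlib

section
/- If d is a positive integer such that d divides 2^d - 1, then d = 1. -/
/-- If a positive integer `d` divides `2^d - 1`, then `d = 1`. -/
theorem stmt_0 (d : ℕ) (hd : 0 < d) (h : d ∣ 2 ^ d - 1) : d = 1 := by
  by_contra hne
  set p := d.minFac with hp_def
  have hp : p.Prime := Nat.minFac_prime hne
  have hpd : p ∣ d := Nat.minFac_dvd d
  have hone : 1 ≤ 2 ^ d := Nat.one_le_two_pow
  -- 2^d - 1 is odd, so d is odd, so p ≠ 2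
  have hodd : Odd (2 ^ d - 1) :=
    Nat.Even.sub_odd hone ((Nat.even_pow' hd.ne').mpr (by norm_num)) odd_one
  have hdodd : Odd d := hodd.of_dvd_nat h
  have hp2 : p ≠ 2 := by
    intro h2
    have : (2 : ℕ) ∣ d := h2 ▸ hpd
    exact (Nat.not_even_iff_odd.mpr hdodd) (even_iff_two_dvd.mpr this)
  haveI : Fact p.Prime := ⟨hp⟩
  have hppos : 1 < p := hp.one_lt
  -- 2 ≠ 0 and 2 ≠ 1 in ZMod p
  have hp3 : 3 ≤ p := by
    rcases hp.two_le.lt_or_eq with hlt | heq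
    · omega
    · exact absurd heq.symm hp2
  have h2ne1 : (2 : ZMod p) ≠ 1 := by
    intro he
    have : ((2 : ℕ) : ZMod p) = ((1 : ℕ) : ZMod p) := by push_cast; exact he
    have := (ZMod.natCast_eq_natCast_iff' 2 1 p).mp this
    simp [Nat.mod_eq_of_lt (by omega : 2 < p), Nat.mod_eq_of_lt (by omega : 1 < p)] at this
  have h2ne0 : (2 : ZMod p) ≠ 0 := by
    intro he
    have : ((2 : ℕ) : ZMod p) = ((0 : ℕ) : ZMod p) := by push_cast; exact he
    have := (ZMod.natCast_eq_natCast_iff' 2 0 p).mp this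
    simp [Nat.mod_eq_of_lt (by omega : 2 < p)] at this
  -- 2^d = 1 in ZMod p
  have hpow : (2 : ZMod p) ^ d = 1 := by
    have hdvd : p ∣ 2 ^ d - 1 := hpd.trans h
    have hmod : (1 : ℕ) ≡ 2 ^ d [MOD p] := (Nat.modEq_iff_dvd' hone).mpr hdvd
    have := (ZMod.natCast_eq_natCast_iff _ _ _).mpr hmod
    push_cast at this
    exact this.symm
  set k := orderOf (2 : ZMod p) with hk_def
  have hkd : k ∣ d := orderOf_dvd_of_pow_eq_one hpow
  have hkp : k ∣ p - 1 := ZMod.orderOf_dvd_card_sub_one h2ne0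
  have hk0 : 0 < k := (isOfFinOrder_iff_pow_eq_one.mpr ⟨d, hd, hpow⟩).orderOf_pos
  have hkne1 : k ≠ 1 := fun h1 => h2ne1 (orderOf_eq_one_iff.mp h1)
  have hk1 : 1 < k := by omega
  -- minFac of k is a prime dividing d, smaller than p
  have hq : k.minFac.Prime := Nat.minFac_prime (by omega)
  have hqd : k.minFac ∣ d := (Nat.minFac_dvd k).trans hkd
  have hple : p ≤ k.minFac := Nat.minFac_le_of_dvd hq.two_le hqd
  have hkle : k ≤ p - 1 := Nat.le_of_dvd (by omega) hkp
  have : k.minFac ≤ k := Nat.minFac_le (by omega)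
  omega
end

section
/- Let Γ = F ⋊_φ ℤ where F is a group with trivial centre. If the image of φ in Out(F) has infinite order, then the centre of Γ is trivial. -/
/-!
A central element `z = (a, t)` of `F ⋊_φ ℤ` commutes with every `c ∈ F`, which says exactly that
`φ ^ t` is conjugation by `a⁻¹`. Since no nonzero power of `φ` is inner, `t = 0`; then conjugation
by `a⁻¹` is trivial, so `a` is central in `F`, hence `a = 1`.
-/

namespace SemidirectProduct

variable {N G : Type*} [Group N] [Group G] {ψ : G →* MulAut N}

theorem apply_right_eq_conj_of_mem_center {z : N ⋊[ψ] G}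
    (hz : z ∈ Subgroup.center (N ⋊[ψ] G)) : ψ z.right = MulAut.conj z.left⁻¹ := by
  ext c
  have hc := congrArg left (Subgroup.mem_center_iff.1 hz (inl c))
  simp only [mul_left, left_inl, right_inl, map_one, MulAut.one_apply] at hc
  rw [MulAut.conj_apply, inv_inv, mul_assoc, hc, inv_mul_cancel_left]

end SemidirectProduct

theorem MulAut.mem_center_of_conj_eq_one {F : Type*} [Group F] {y : F}
    (hy : MulAut.conj y = 1) : y ∈ Subgroup.center F :=
  Subgroup.mem_center_iff.2 fun g => by
    have hg : y * g * y⁻¹ = g := by simpa using DFunLike.congr_fun hy g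
    rw [mul_inv_eq_iff_eq_mul] at hg
    exact hg.symm

theorem MulAut.eq_zero_of_zpow_eq_conj {F : Type*} [Group F] {φ : MulAut F}
    (h : ∀ n : ℕ, 0 < n → ∀ y : F, φ ^ n ≠ MulAut.conj y) {m : ℤ} {y : F}
    (hm : φ ^ m = MulAut.conj y) : m = 0 := by
  by_contra hm0
  have hpos : 0 < m.natAbs := Int.natAbs_pos.2 hm0
  rcases Int.natAbs_eq m with hnonneg | hneg
  · exact h _ hpos y (by rw [← zpow_natCast, ← hnonneg, hm])
  · exact h _ hpos y⁻¹ (by rw [← zpow_natCast, show (m.natAbs : ℤ) = -m by omega, zpow_neg, hm,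
      map_inv])

/-- If `F` has trivial centre and the image of `φ` in `Out(F)` has infinite order
(no positive power of `φ` is inner), then `F ⋊_φ ℤ` has trivial centre. -/
theorem stmt_2 (F : Type*) [Group F] (hF : Subgroup.center F = ⊥) (φ : MulAut F)
    (h : ∀ n : ℕ, 0 < n → ∀ y : F, φ ^ n ≠ MulAut.conj y) :
    Subgroup.center (F ⋊[zpowersHom (MulAut F) φ] Multiplicative ℤ) = ⊥ := by
  refine (Subgroup.eq_bot_iff_forall _).2 fun z hz => ?_
  have hconj := SemidirectProduct.apply_right_eq_conj_of_mem_center hz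
  have hright : z.right = 1 :=
    MulAut.eq_zero_of_zpow_eq_conj h (by rwa [zpowersHom_apply] at hconj)
  have hleft : z.left = 1 := by
    have hcenter := MulAut.mem_center_of_conj_eq_one (by rw [← hconj, hright, map_one])
    rwa [hF, Subgroup.mem_bot, inv_eq_one] at hcenter
  exact SemidirectProduct.ext hleft hright
end

section
/- Let Γ = F ⋊_φ ℤ where F is a group with trivial centre. If the image of φ in Out(F) has finite order m, then the centre of Γ is infinite cyclic, generated by an element x₀^{-1}·t^m where φ^m is conjugation by x₀. -/
/-!
A central element `(a, tⁿ)` of `F ⋊_φ ℤ` commutes with `F`, which forces `φⁿ = ad_{a⁻¹}`; so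
`[φ]ⁿ = 1` in `Out(F)` and `m ∣ n`. Because `F` has trivial centre, `ad` is injective, so a central
element is determined by its `ℤ`-coordinate, and `x₀⁻¹ tᵐ` (central since `φ` fixes `x₀`) has
a power with any prescribed coordinate in `mℤ`. Its projection `tᵐ` to `ℤ` has infinite order.
-/

namespace MulAut

variable {F : Type*} [Group F]

theorem ker_conj : (conj : F →* MulAut F).ker = Subgroup.center F := by
  ext g
  simp only [MonoidHom.mem_ker, Subgroup.mem_center_iff, MulEquiv.ext_iff, conj_apply, one_apply]
  exact forall_congr' fun h => by rw [mul_inv_eq_iff_eq_mul, eq_comm]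

theorem conj_injective_of_center_eq_bot (hF : Subgroup.center F = ⊥) :
    Function.Injective (conj : F →* MulAut F) :=
  (MonoidHom.ker_eq_bot_iff _).mp (ker_conj.trans hF)

theorem mul_conj_mul_inv (ψ : MulAut F) (x : F) : ψ * conj x * ψ⁻¹ = conj (ψ x) := by
  ext y
  simp [conj_apply]

instance : (conj : F →* MulAut F).range.Normal :=
  ⟨by rintro _ ⟨x, rfl⟩ ψ; exact ⟨ψ x, (mul_conj_mul_inv ψ x).symm⟩⟩

/-- `conj (φ x₀) = φ * φ ^ m * φ⁻¹ = conj x₀`, as `φ` commutes with its own power. -/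
theorem apply_eq_self_of_pow_eq_conj (hF : Subgroup.center F = ⊥) {φ : MulAut F} {m : ℕ}
    {x₀ : F} (hφm : φ ^ m = conj x₀) : φ x₀ = x₀ :=
  conj_injective_of_center_eq_bot hF <| by
    rw [← mul_conj_mul_inv, ← hφm, (Commute.self_pow φ m).eq, mul_inv_cancel_right]

end MulAut

abbrev OuterAut (F : Type*) [Group F] := MulAut F ⧸ (MulAut.conj : F →* MulAut F).range

namespace OuterAut

variable {F : Type*} [Group F]

theorem mk_zpow_eq_one_iff (φ : MulAut F) (n : ℤ) :
    (φ : OuterAut F) ^ n = 1 ↔ ∃ y, MulAut.conj y = φ ^ n := by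
  rw [← QuotientGroup.mk_zpow, QuotientGroup.eq_one_iff, MonoidHom.mem_range]

theorem orderOf_mk {φ : MulAut F} {m : ℕ} (hm : 0 < m) {x₀ : F}
    (hφm : φ ^ m = MulAut.conj x₀)
    (hmin : ∀ k : ℕ, 0 < k → k < m → ∀ y : F, φ ^ k ≠ MulAut.conj y) :
    orderOf (φ : OuterAut F) = m := by
  refine (orderOf_eq_iff hm).mpr ⟨?_, fun k hk hk0 => ?_⟩
  · rw [← zpow_natCast, mk_zpow_eq_one_iff, zpow_natCast]
    exact ⟨x₀, hφm.symm⟩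
  · rw [Ne, ← zpow_natCast, mk_zpow_eq_one_iff, zpow_natCast]
    exact fun ⟨y, hy⟩ => hmin k hk0 hk y hy.symm

end OuterAut

namespace SemidirectProduct

variable {N G : Type*} [Group N] [Group G] {ψ : G →* MulAut N}

theorem map_right_eq_conj_of_mem_center {a : N ⋊[ψ] G} (ha : a ∈ Subgroup.center (N ⋊[ψ] G)) :
    ψ a.right = MulAut.conj a.left⁻¹ := by
  ext x
  have h := congrArg left (Subgroup.mem_center_iff.mp ha (inl x))
  simp only [mul_left, left_inl, right_inl, map_one, MulAut.one_apply] at h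
  rw [MulAut.conj_apply, inv_inv, mul_assoc, eq_inv_mul_iff_mul_eq, h]

theorem eq_of_mem_center_of_right_eq (hN : Subgroup.center N = ⊥) {a b : N ⋊[ψ] G}
    (ha : a ∈ Subgroup.center (N ⋊[ψ] G)) (hb : b ∈ Subgroup.center (N ⋊[ψ] G))
    (h : a.right = b.right) : a = b := by
  have hconj := (map_right_eq_conj_of_mem_center ha).symm.trans
    (h ▸ map_right_eq_conj_of_mem_center hb)
  exact SemidirectProduct.ext (inv_injective (MulAut.conj_injective_of_center_eq_bot hN hconj)) h

theorem mk_mem_center {G : Type*} [CommGroup G] {ψ : G →* MulAut N} {n : N} {g : G}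
    (hg : ψ g = MulAut.conj n⁻¹) (hn : ∀ h, ψ h n = n) :
    (⟨n, g⟩ : N ⋊[ψ] G) ∈ Subgroup.center (N ⋊[ψ] G) := by
  refine Subgroup.mem_center_iff.mpr fun b => SemidirectProduct.ext ?_ (mul_comm _ _)
  simp only [mul_left, hn, hg, MulAut.conj_apply, inv_inv]
  group

end SemidirectProduct
/-- If `F` has trivial centre and the image of `φ` in `Out(F)` has finite order `m`,
with `φ^m = ad_{x₀}`, then the centre of `F ⋊_φ ℤ` is infinite cyclic, generated by
`x₀⁻¹ · t^m`. -/
theorem stmt_3 (F : Type*) [Group F] (hF : Subgroup.center F = ⊥) (φ : MulAut F)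
    (m : ℕ) (hm : 0 < m) (x₀ : F) (hφm : φ ^ m = MulAut.conj x₀)
    (hmin : ∀ k : ℕ, 0 < k → k < m → ∀ y : F, φ ^ k ≠ MulAut.conj y) :
    Subgroup.center (F ⋊[zpowersHom (MulAut F) φ] Multiplicative ℤ) =
        Subgroup.zpowers
          (⟨x₀⁻¹, Multiplicative.ofAdd (m : ℤ)⟩ :
            F ⋊[zpowersHom (MulAut F) φ] Multiplicative ℤ) ∧
      ¬ IsOfFinOrder
          (⟨x₀⁻¹, Multiplicative.ofAdd (m : ℤ)⟩ :
            F ⋊[zpowersHom (MulAut F) φ] Multiplicative ℤ) := by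
  set z : F ⋊[zpowersHom (MulAut F) φ] Multiplicative ℤ := ⟨x₀⁻¹, .ofAdd (m : ℤ)⟩
  have hfix : ∀ k : ℤ, (φ ^ k) x₀ = x₀ := fun k =>
    Subgroup.zpow_mem (MulAction.stabilizer (MulAut F) x₀)
      (MulAut.apply_eq_self_of_pow_eq_conj hF hφm) k
  have hz : z ∈ Subgroup.center _ :=
    SemidirectProduct.mk_mem_center (by simp [hφm]) (fun k => by simp [hfix])
  have hz_right (q : ℤ) : (z ^ q).right = .ofAdd (q * m) := by
    change SemidirectProduct.rightHom (z ^ q) = _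
    rw [map_zpow]
    rfl
  refine ⟨le_antisymm (fun a ha => ?_) (Subgroup.zpowers_le.mpr hz), fun hfin => ?_⟩
  · obtain ⟨q, hq⟩ : (orderOf (φ : OuterAut F) : ℤ) ∣ a.right.toAdd :=
      orderOf_dvd_iff_zpow_eq_one.mpr <| (OuterAut.mk_zpow_eq_one_iff _ _).mpr
        ⟨_, (SemidirectProduct.map_right_eq_conj_of_mem_center ha).symm⟩
    rw [OuterAut.orderOf_mk hm hφm hmin] at hq
    exact ⟨q, SemidirectProduct.eq_of_mem_center_of_right_eq hF (Subgroup.zpow_mem _ hz q) ha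
      (by rw [hz_right, mul_comm, ← hq]; rfl)⟩
  · have := SemidirectProduct.rightHom.isOfFinOrder hfin
    simp [z, isOfFinOrder_iff_eq_one, hm.ne'] at this
end

section
/- In a group G that is an extension of a torsion-free group by an abelian group (i.e., G has a torsion-free normal subgroup K with G/K abelian), the normaliser of any finite subgroup S ≤ G equals its centraliser. -/
/-!
If `g` normalises the finite subgroup `S` and `s ∈ S`, the commutator `⁅g, s⁆` lies in `S`, so
it has finite order; it also lies in `K` because `G ⧸ K` is abelian. As `K` is torsion-free,
`⁅g, s⁆ = 1`, i.e. `g` commutes with `s`.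
-/

open scoped commutatorElement

namespace Subgroup

variable {G : Type*} [Group G]

theorem commutatorElement_mem_of_mem_normalizer {S : Subgroup G} {g s : G}
    (hg : g ∈ normalizer (S : Set G)) (hs : s ∈ S) : ⁅g, s⁆ ∈ S := by
  rw [commutatorElement_def]
  exact S.mul_mem ((mem_normalizer_iff.mp hg s).mp hs) (S.inv_mem hs)

theorem commutatorElement_mem_of_isMulCommutative_quotient (K : Subgroup G) [K.Normal]
    [IsMulCommutative (G ⧸ K)] (g s : G) : ⁅g, s⁆ ∈ K :=
  Normal.quotient_commutative_iff_commutator_le.mp ‹_›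
    (commutator_mem_commutator (mem_top g) (mem_top s))

theorem eq_one_of_mem_of_mem_finite {K S : Subgroup G} [Finite S]
    (hTF : ∀ g ∈ K, g ≠ 1 → ¬ IsOfFinOrder g) {x : G} (hxK : x ∈ K) (hxS : x ∈ S) : x = 1 := by
  by_contra hx
  exact hTF x hxK hx (Submonoid.isOfFinOrder_coe.mpr (isOfFinOrder_of_finite (⟨x, hxS⟩ : S)))

theorem normalizer_eq_centralizer_of_finite (K : Subgroup G) [K.Normal]
    [IsMulCommutative (G ⧸ K)] (hTF : ∀ g ∈ K, g ≠ 1 → ¬ IsOfFinOrder g)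
    (S : Subgroup G) [Finite S] :
    normalizer (S : Set G) = centralizer (S : Set G) := by
  refine le_antisymm (fun g hg => mem_centralizer_iff.mpr fun s hs => ?_)
    (centralizer_le_normalizer _)
  have hcomm : ⁅g, s⁆ = 1 := eq_one_of_mem_of_mem_finite hTF
    (commutatorElement_mem_of_isMulCommutative_quotient K g s)
    (commutatorElement_mem_of_mem_normalizer hg hs)
  exact (commutatorElement_eq_one_iff_mul_comm.mp hcomm).symm

end Subgroup

/-- In a (torsion-free)-by-abelian group, the normaliser of a finite subgroup equals
its centraliser. -/
theorem stmt_6 (G : Type*) [Group G] (K : Subgroup G) [K.Normal]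
    (hTF : ∀ g ∈ K, g ≠ 1 → ¬ IsOfFinOrder g)
    (hAb : ∀ a b : G ⧸ K, a * b = b * a)
    (S : Subgroup G) (hS : Finite S) :
    Subgroup.normalizer (S : Set G) = Subgroup.centralizer (S : Set G) :=
  have : IsMulCommutative (G ⧸ K) := ⟨⟨hAb⟩⟩
  Subgroup.normalizer_eq_centralizer_of_finite K hTF S
end

section
/- Let m ≥ 2 and let a, b be two generating m-tuples (with all entries possibly repeated) of the cyclic group ℤ/m, with tuple length M ≥ 2. Then a and b are Nielsen equivalent; equivalently, for any two surjective homomorphisms p, p' : F_M → ℤ/m from a free group of rank M ≥ 2, there exists an automorphism ψ of F_M with p' ∘ ψ = p. -/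
/-!
A homomorphism `FreeGroup α →* Multiplicative A` is a tuple `v : α → A`, and precomposing with
the transvection `of i ↦ of i * of j ^ n` replaces `v i` by `v i + n • v j`. For `A = ZMod m`
such moves carry every generating tuple to `Pi.single i 1`. Write `∑ c l • v l = 1`. Since
`ZMod m` has stable range one (if `a` and `b` are coprime then `a + k * b` is a unit, for `k` the
product of the primes of `m` not dividing `a`), adding a multiple of the other entries to `v i`
makes it a unit `u`. Using a second index `j`, turn `v j` into `1 - u`, then `v i` into `1`, and
finally clear all other entries with multiples of `v i = 1`.
-/

namespace ZMod

variable {m : ℕ} [NeZero m]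

theorem castHom_eq_zero_iff {p : ℕ} (h : p ∣ m) (x : ZMod m) :
    castHom h (ZMod p) x = 0 ↔ p ∣ x.val := by
  rw [← natCast_zmod_val x, map_natCast, natCast_eq_zero_iff, val_natCast_of_lt x.val_lt]

theorem isUnit_iff_forall_castHom_ne_zero (x : ZMod m) :
    IsUnit x ↔ ∀ p, p.Prime → (h : p ∣ m) → castHom h (ZMod p) x ≠ 0 := by
  conv_lhs => rw [← natCast_zmod_val x]
  simp only [isUnit_iff_coprime, ne_eq, castHom_eq_zero_iff]
  rw [← not_iff_not, Nat.Prime.not_coprime_iff_dvd]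
  push Not
  exact exists_congr fun p => by tauto

theorem exists_isUnit_add_mul {a b : ZMod m} (h : IsCoprime a b) :
    ∃ k : ZMod m, IsUnit (a + k * b) := by
  refine ⟨((∏ q ∈ m.primeFactors with ¬ q ∣ a.val, q : ℕ) : ZMod m), ?_⟩
  rw [isUnit_iff_forall_castHom_ne_zero]
  intro p hp hpm
  have := Fact.mk hp
  set φ := castHom hpm (ZMod p)
  have hk : φ (∏ q ∈ m.primeFactors with ¬ q ∣ a.val, q : ℕ) = 0 ↔ φ a ≠ 0 := by
    rw [map_natCast, natCast_eq_zero_iff, Prime.dvd_finsetProd_iff hp.prime, Ne,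
      castHom_eq_zero_iff]
    constructor
    · rintro ⟨q, hq, hpq⟩
      rw [Finset.mem_filter, Nat.mem_primeFactors] at hq
      obtain rfl := (Nat.prime_dvd_prime_iff_eq hp hq.1.1).mp hpq
      exact hq.2
    · intro ha
      exact ⟨p, Finset.mem_filter.mpr ⟨Nat.mem_primeFactors.mpr ⟨hp, hpm, NeZero.ne m⟩, ha⟩,
        dvd_rfl⟩
  rw [map_add, map_mul]
  by_cases ha : φ a = 0
  · have hb : IsUnit (φ b) := by simpa [ha] using h.map φ
    rw [ha, zero_add]
    exact mul_ne_zero (mt hk.mp (not_not.mpr ha)) hb.ne_zero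
  · rw [hk.mpr ha, zero_mul, add_zero]
    exact ha

end ZMod

open FreeGroup Multiplicative Function

variable {α A : Type*}

namespace FreeGroup

@[simp] theorem lift_apply_of_eq {G : Type*} [Group G] (f : FreeGroup α →* G) :
    (lift fun l => f (of l)) = f :=
  lift.apply_symm_apply f

theorem exists_sum_zsmul_eq_of_surjective [Fintype α] [AddCommGroup A]
    {p : FreeGroup α →* Multiplicative A} (hp : Surjective p) (x : A) :
    ∃ c : α → ℤ, ∑ l, c l • toAdd (p (of l)) = x := by
  have hx : ofAdd x ∈ Subgroup.closure (Set.range fun l => p (of l)) := by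
    rw [← range_lift_eq_closure, lift_apply_of_eq, MonoidHom.range_eq_top.mpr hp]
    exact Subgroup.mem_top _
  obtain ⟨c, hc⟩ := Subgroup.exists_of_mem_closure_range _ _ hx
  exact ⟨c, by simpa using congrArg toAdd hc.symm⟩

variable [DecidableEq α]

def transvectionHom (i j : α) (n : ℤ) : FreeGroup α →* FreeGroup α :=
  lift (update of i (of i * of j ^ n))

theorem transvectionHom_comp_neg {i j : α} (hij : i ≠ j) (n : ℤ) :
    (transvectionHom i j n).comp (transvectionHom i j (-n)) = MonoidHom.id _ := by
  ext l
  rcases eq_or_ne l i with rfl | hl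
  · simp [transvectionHom, hij.symm]
  · simp [transvectionHom, hl]

def transvection (i j : α) (hij : i ≠ j) (n : ℤ) : MulAut (FreeGroup α) :=
  MonoidHom.toMulEquiv (transvectionHom i j n) (transvectionHom i j (-n))
    (by simpa using transvectionHom_comp_neg hij (-n)) (transvectionHom_comp_neg hij n)

end FreeGroup

def NielsenEquiv [AddGroup A] (v w : α → A) : Prop :=
  ∃ ψ : MulAut (FreeGroup α), (lift fun l => ofAdd (w l)).comp ψ.toMonoidHom =
    lift fun l => ofAdd (v l)

namespace NielsenEquiv

section AddGroup

variable [AddGroup A] {u v w : α → A}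

@[refl] theorem refl (v : α → A) : NielsenEquiv v v := ⟨1, rfl⟩

@[symm] theorem symm (h : NielsenEquiv v w) : NielsenEquiv w v := by
  obtain ⟨ψ, hψ⟩ := h
  exact ⟨ψ⁻¹, by rw [← hψ]; ext; simp⟩

@[trans] theorem trans (h₁ : NielsenEquiv u v) (h₂ : NielsenEquiv v w) : NielsenEquiv u w := by
  obtain ⟨ψ₁, hψ₁⟩ := h₁
  obtain ⟨ψ₂, hψ₂⟩ := h₂
  exact ⟨ψ₂ * ψ₁, by rw [← hψ₁, ← hψ₂]; ext; simp⟩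

variable [DecidableEq α]

theorem update_add_zsmul (v : α → A) {i j : α} (hij : i ≠ j) (n : ℤ) :
    NielsenEquiv v (update v i (v i + n • v j)) := by
  refine ⟨transvection i j hij (-n), ?_⟩
  ext l
  rcases eq_or_ne l i with rfl | hl
  · simp [transvection, transvectionHom, hij.symm]
  · simp [transvection, transvectionHom, hl]

theorem of_forall_ne_eq_add_zsmul [Fintype α] {i : α} (hi : w i = v i)
    (h : ∀ l ≠ i, ∃ n : ℤ, w l = v l + n • v i) : NielsenEquiv v w := by
  suffices key : ∀ s : Finset α, i ∉ s → NielsenEquiv v (s.piecewise w v) by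
    convert key _ (Finset.notMem_erase i Finset.univ) using 1
    ext l
    rcases eq_or_ne l i with rfl | hl
    · simp [hi]
    · simp [hl]
  intro s
  induction s using Finset.induction_on with
  | empty => simpa using refl v
  | insert j s hj ih =>
    intro his
    have hji : j ≠ i := fun h => his (h ▸ Finset.mem_insert_self j s)
    have his' : i ∉ s := fun h => his (Finset.mem_insert_of_mem h)
    obtain ⟨n, hn⟩ := h j hji
    refine (ih his').trans ?_
    convert update_add_zsmul (s.piecewise w v) hji n using 1
    rw [Finset.piecewise_insert, Finset.piecewise_eq_of_notMem _ _ _ hj,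
      Finset.piecewise_eq_of_notMem _ _ _ his', hn]

end AddGroup

theorem update_add_sum_zsmul [AddCommGroup A] [DecidableEq α] (v : α → A) {i : α}
    {s : Finset α} (hi : i ∉ s) (c : α → ℤ) :
    NielsenEquiv v (update v i (v i + ∑ j ∈ s, c j • v j)) := by
  induction s using Finset.induction_on with
  | empty => simpa using refl v
  | insert j s hj ih =>
    have hij : i ≠ j := fun h => hi (h ▸ Finset.mem_insert_self i s)
    refine (ih fun h => hi (Finset.mem_insert_of_mem h)).trans ?_
    convert update_add_zsmul (update v i (v i + ∑ j ∈ s, c j • v j)) hij (c j) using 1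
    simp only [update_idem, update_self, update_of_ne hij.symm, Finset.sum_insert hj]
    congr 1
    abel

section ZMod

variable {m : ℕ} [Fintype α] [DecidableEq α]

theorem pi_single_of_isUnit {v : α → ZMod m} {i j : α} (hij : i ≠ j) (hu : IsUnit (v i)) :
    NielsenEquiv v (Pi.single i 1) := by
  obtain ⟨n, hn⟩ := ZMod.intCast_surjective ((1 - v i - v j) * (↑hu.unit⁻¹ : ZMod m))
  set w := update v j (1 - v i)
  have h₁ : NielsenEquiv v w := by
    convert update_add_zsmul v hij.symm n using 2
    rw [zsmul_eq_mul, hn, mul_assoc, hu.val_inv_mul]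
    ring
  have h₂ : NielsenEquiv w (update w i 1) := by
    convert update_add_zsmul w hij 1 using 2
    simp [w, update_of_ne hij]
  have h₃ : NielsenEquiv (update w i 1) (Pi.single i 1) :=
    of_forall_ne_eq_add_zsmul (i := i) (by simp) fun l hl => by
      obtain ⟨n, hn⟩ := ZMod.intCast_surjective (w l)
      exact ⟨-n, by simp [hl, hn]⟩
  exact h₁.trans (h₂.trans h₃)

theorem pi_single_of_sum_zsmul_eq_one [NeZero m] {v : α → ZMod m} {i j : α} (hij : i ≠ j)
    {c : α → ℤ} (hc : ∑ l, c l • v l = 1) : NielsenEquiv v (Pi.single i 1) := by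
  have hcop : IsCoprime (v i) (∑ l ∈ Finset.univ.erase i, c l • v l) :=
    ⟨c i, 1, by
      rw [one_mul, ← zsmul_eq_mul, Finset.add_sum_erase _ (fun l => c l • v l) (Finset.mem_univ i),
        hc]⟩
  obtain ⟨k, hk⟩ := ZMod.exists_isUnit_add_mul hcop
  obtain ⟨n, rfl⟩ := ZMod.intCast_surjective k
  have hkB : ∑ l ∈ Finset.univ.erase i, (n * c l) • v l =
      n * ∑ l ∈ Finset.univ.erase i, c l • v l := by
    rw [← zsmul_eq_mul, Finset.smul_sum]
    simp only [mul_smul]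
  refine (update_add_sum_zsmul v (Finset.notMem_erase i Finset.univ) fun l => n * c l).trans
    (pi_single_of_isUnit hij ?_)
  rwa [update_self, hkB]

end ZMod

end NielsenEquiv

/-- Any two surjections from a free group of rank `M ≥ 2` onto `ℤ/m` (`m ≥ 2`) differ
by an automorphism of the free group: there is a single Nielsen equivalence class of
generating `M`-tuples of `ℤ/m`. -/
theorem stmt_11 (m M : ℕ) (hm : 2 ≤ m) (hM : 2 ≤ M)
    (p p' : FreeGroup (Fin M) →* Multiplicative (ZMod m))
    (hp : Function.Surjective p) (hp' : Function.Surjective p') :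
    ∃ ψ : MulAut (FreeGroup (Fin M)), p'.comp ψ.toMonoidHom = p := by
  have : NeZero m := ⟨by omega⟩
  have hij : (⟨0, by omega⟩ : Fin M) ≠ ⟨1, by omega⟩ := by simp
  have standard : ∀ q : FreeGroup (Fin M) →* Multiplicative (ZMod m), Surjective q →
      NielsenEquiv (fun l => toAdd (q (of l))) (Pi.single ⟨0, by omega⟩ 1) := fun q hq =>
    let ⟨_, hc⟩ := exists_sum_zsmul_eq_of_surjective hq 1
    NielsenEquiv.pi_single_of_sum_zsmul_eq_one hij hc
  obtain ⟨ψ, hψ⟩ := (standard p hp).trans (standard p' hp').symm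
  exact ⟨ψ, by simpa using hψ⟩
end

section
/- Let m ≥ 2, M ≥ 2, and N = m(M-1) + 1. Then there exists an automorphism φ of the free group F_N of rank N such that F_N ⋊_φ ℤ is isomorphic to F_M × ℤ, and the image of φ in Out(F_N) has order m. -/
/-!
Let `F_M` be free on `a, y_1, …, y_{M-1}` and let `K` be the kernel of `F_M → ℤ/m`, `a ↦ 1`,
`y_i ↦ 0`. It is free on `x_{j,i} = a^j y_i a^{-j}` (`0 ≤ j < m`) and `b = a^m`, and conjugation
by `a` restricts to the automorphism `φ` of `K` with `x_{j,i} ↦ x_{j+1,i}`,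
`x_{m-1,i} ↦ b x_{0,i} b⁻¹`, `b ↦ b`. Hence `φ^m` is conjugation by `b`, while for `0 < k < m`
the power `φ^k` sends the basis element `x_{0,i}` to the basis element `x_{k,i}`, which is not
conjugate to it, so `φ^k` is not inner.

In `K ⋊_φ ℤ`, with stable letter `t`, the element `b⁻¹ t^m` is central; `a ↦ t`, `y_i ↦ x_{0,i}`
and `1 ∈ ℤ ↦ b⁻¹ t^m` define an isomorphism `F_M × ℤ ≅ K ⋊_φ ℤ`, whose inverse is
`t ↦ (a, 0)`, `x_{j,i} ↦ (a^j y_i a^{-j}, 0)`, `b ↦ (a^m, -1)`.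
-/

open Multiplicative SemidirectProduct

theorem FreeGroup.isConj_of_iff {α : Type*} {a b : α} : IsConj (of a) (of b) ↔ a = b := by
  classical
  refine ⟨fun h => ?_, fun h => h ▸ IsConj.refl _⟩
  let count : FreeGroup α →* Multiplicative ℤ :=
    FreeGroup.lift fun c => ofAdd (if c = b then 1 else 0)
  simpa [count] using isConj_iff_eq.mp (count.map_isConj h)

theorem MulAut.congr_conj {A B : Type*} [Group A] [Group B] (e : A ≃* B) (a : A) :
    MulAut.congr e (MulAut.conj a) = MulAut.conj (e a) := by
  ext x
  simp [MulAut.conj_apply]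

section MappingTorus

variable {A B G : Type*} [Group A] [Group B] [Group G]

theorem MonoidHom.map_zpow_apply_of_map_apply (f : A →* G) {φ : MulAut A} {c : G}
    (h : ∀ x, f (φ x) = c * f x * c⁻¹) (z : ℤ) (x : A) :
    f ((φ ^ z) x) = c ^ z * f x * (c ^ z)⁻¹ := by
  have h_inv (x : A) : f (φ⁻¹ x) = c⁻¹ * f x * c := by
    have := h (φ⁻¹ x)
    rw [MulAut.apply_inv_self] at this
    rw [this]
    group
  induction z using Int.induction_on generalizing x with
  | zero => simp
  | succ n ih => rw [zpow_add_one, MulAut.mul_apply, ih, h]; group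
  | pred n ih => rw [zpow_sub_one, MulAut.mul_apply, ih, h_inv]; group

def SemidirectProduct.zpowersCongr (e : A ≃* B) (φ : MulAut A) :
    A ⋊[zpowersHom (MulAut A) φ] Multiplicative ℤ ≃*
      B ⋊[zpowersHom (MulAut B) (MulAut.congr e φ)] Multiplicative ℤ :=
  SemidirectProduct.congr e (MulEquiv.refl _) fun z => by
    ext x
    simp only [MulEquiv.trans_apply, MulEquiv.refl_apply, zpowersHom_apply]
    rw [← map_zpow]
    simp

theorem SemidirectProduct.commute_inl_inv_mul_inr {φ : MulAut A} {b : A} {m : ℤ}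
    (hm : φ ^ m = MulAut.conj b) (hb : φ b = b)
    (g : A ⋊[zpowersHom (MulAut A) φ] Multiplicative ℤ) :
    Commute g (inl b⁻¹ * inr (ofAdd m)) := by
  rw [← inl_left_mul_inr_right g]
  refine Commute.mul_left ?_ ?_
  · ext <;> simp [hm, MulAut.conj_apply, mul_assoc]
  · have : (inr g.right : A ⋊[zpowersHom (MulAut A) φ] Multiplicative ℤ) =
        inr (ofAdd 1) ^ toAdd g.right := by
      rw [← map_zpow, ← ofAdd_zsmul, smul_eq_mul, mul_one, ofAdd_toAdd]
    rw [this]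
    refine Commute.zpow_left ?_ _
    ext <;> simp [hb, add_comm]

end MappingTorus

namespace CyclicCover

open Fin.NatCast

variable (m : ℕ) (X : Type*)

/-- `of (some (j, i))` is `x_{j,i} = a^j y_i a^{-j}` and `of none` is `aPow = a^m`. -/
abbrev Kernel := FreeGroup (Option (Fin m × X))

def aPow : Kernel m X := FreeGroup.of none

def kernelHom : Kernel m X →* FreeGroup (Option X) × Multiplicative ℤ :=
  FreeGroup.lift fun o => o.elim (FreeGroup.of none ^ m, ofAdd (-1)) fun p =>
    (FreeGroup.of none ^ (p.1 : ℕ) * FreeGroup.of (some p.2) * (FreeGroup.of none ^ (p.1 : ℕ))⁻¹, 1)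

theorem kernelHom_aPow : kernelHom m X (aPow m X) = (FreeGroup.of none ^ m, ofAdd (-1)) := by
  simp [kernelHom, aPow]

variable {X} in
theorem kernelHom_of (j : Fin m) (i : X) :
    kernelHom m X (FreeGroup.of (some (j, i))) =
      (FreeGroup.of none ^ (j : ℕ) * FreeGroup.of (some i) * (FreeGroup.of none ^ (j : ℕ))⁻¹, 1) :=
  FreeGroup.lift_apply_of

variable [NeZero m] {X}

/-- `a^n y_i a^{-n}`, written in the basis of `Kernel`. -/
def gen (n : ℕ) (i : X) : Kernel m X :=
  aPow m X ^ (n / m) * FreeGroup.of (some ((n : Fin m), i)) * (aPow m X ^ (n / m))⁻¹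

theorem gen_val (j : Fin m) (i : X) : gen m j i = FreeGroup.of (some (j, i)) := by
  simp [gen, Nat.div_eq_of_lt j.isLt]

theorem gen_add_mul (n q : ℕ) (i : X) :
    gen m (n + m * q) i = aPow m X ^ q * gen m n i * (aPow m X ^ q)⁻¹ := by
  have hcast : ((n + m * q : ℕ) : Fin m) = n := by simp
  rw [gen, gen, hcast, Nat.add_mul_div_left _ _ (NeZero.pos m)]
  group

variable (X)

def shiftHom : Kernel m X →* Kernel m X :=
  FreeGroup.lift fun o => o.elim (aPow m X) fun p => gen m (p.1 + 1) p.2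

theorem shiftHom_aPow : shiftHom m X (aPow m X) = aPow m X := by
  simp [shiftHom, aPow]

variable {X}

theorem shiftHom_of (j : Fin m) (i : X) :
    shiftHom m X (FreeGroup.of (some (j, i))) = gen m (j + 1) i := by
  simp [shiftHom]

theorem shiftHom_gen (n : ℕ) (i : X) : shiftHom m X (gen m n i) = gen m (n + 1) i := by
  rw [gen, map_mul, map_mul, map_inv, map_pow, shiftHom_aPow, shiftHom_of, Fin.val_natCast,
    ← gen_add_mul, add_right_comm, Nat.mod_add_div]

theorem shiftHom_iterate_gen (k n : ℕ) (i : X) :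
    (shiftHom m X)^[k] (gen m n i) = gen m (n + k) i := by
  induction k with
  | zero => rfl
  | succ k ih => rw [Function.iterate_succ_apply', ih, shiftHom_gen]; rfl

variable (X)

theorem shiftHom_iterate_eq_conj : (shiftHom m X)^[m] = MulAut.conj (aPow m X) := by
  funext x
  induction x using FreeGroup.induction_on with
  | C1 => simp [iterate_map_one]
  | of a =>
    rcases a with _ | ⟨j, i⟩
    · change (shiftHom m X)^[m] (aPow m X) = MulAut.conj (aPow m X) (aPow m X)
      rw [MulAut.conj_apply, mul_inv_cancel_right]
      exact Function.iterate_fixed (shiftHom_aPow m X) m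
    · rw [← gen_val, shiftHom_iterate_gen]
      simpa using gen_add_mul m j 1 i
  | inv_of x ih => rw [iterate_map_inv, ih, map_inv]
  | mul x y hx hy => rw [iterate_map_mul, hx, hy, map_mul]

theorem shiftHom_bijective : Function.Bijective (shiftHom m X) := by
  have h : Function.Bijective (shiftHom m X)^[m] := by
    rw [shiftHom_iterate_eq_conj]
    exact (MulAut.conj _).bijective
  have hm : m - 1 + 1 = m := Nat.sub_add_cancel (NeZero.one_le)
  refine ⟨Function.Injective.of_comp (f := (shiftHom m X)^[m - 1]) ?_,
    Function.Surjective.of_comp (g := (shiftHom m X)^[m - 1]) ?_⟩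
  · rw [← Function.iterate_succ, Nat.succ_eq_add_one, hm]
    exact h.injective
  · rw [← Function.iterate_succ', Nat.succ_eq_add_one, hm]
    exact h.surjective

noncomputable def shift : MulAut (Kernel m X) :=
  MulEquiv.ofBijective (shiftHom m X) (shiftHom_bijective m X)

theorem shift_pow_apply (k : ℕ) (x : Kernel m X) : (shift m X ^ k) x = (shiftHom m X)^[k] x := by
  induction k generalizing x with
  | zero => rfl
  | succ k ih => rw [pow_succ, MulAut.mul_apply, ih, Function.iterate_succ_apply]; rfl

theorem shift_aPow : shift m X (aPow m X) = aPow m X :=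
  shiftHom_aPow m X

theorem shift_pow_eq_conj : shift m X ^ m = MulAut.conj (aPow m X) := by
  ext x
  rw [shift_pow_apply, shiftHom_iterate_eq_conj]

variable {X}

theorem shift_gen (n : ℕ) (i : X) : shift m X (gen m n i) = gen m (n + 1) i :=
  shiftHom_gen m n i

theorem shift_pow_gen (k n : ℕ) (i : X) : (shift m X ^ k) (gen m n i) = gen m (n + k) i := by
  rw [shift_pow_apply, shiftHom_iterate_gen]

theorem shift_pow_ne_conj [Nonempty X] {k : ℕ} (hk₀ : 0 < k) (hk : k < m) (x : Kernel m X) :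
    shift m X ^ k ≠ MulAut.conj x := by
  intro h
  obtain ⟨i⟩ := ‹Nonempty X›
  have hconj : IsConj (gen m 0 i) (gen m k i) := by
    rw [← zero_add k, ← shift_pow_gen, h]
    exact isConj_iff.mpr ⟨x, rfl⟩
  rw [show gen m 0 i = FreeGroup.of (some (0, i)) from gen_val m 0 i,
    show gen m k i = FreeGroup.of (some (⟨k, hk⟩, i)) from gen_val m ⟨k, hk⟩ i,
    FreeGroup.isConj_of_iff] at hconj
  simp only [Option.some.injEq, Prod.mk.injEq, Fin.ext_iff, Fin.val_zero, and_true] at hconj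
  exact hk₀.ne hconj

theorem kernelHom_gen (n : ℕ) (i : X) :
    kernelHom m X (gen m n i) =
      (FreeGroup.of none ^ n * FreeGroup.of (some i) * (FreeGroup.of none ^ n)⁻¹, 1) := by
  rw [gen, map_mul, map_mul, map_inv, map_pow, kernelHom_aPow, kernelHom_of, Fin.val_natCast]
  conv_rhs => rw [← Nat.mod_add_div n m]
  refine Prod.ext ?_ (by simp)
  simp only [Prod.fst_mul, Prod.fst_inv, Prod.pow_fst, pow_add, pow_mul]
  group

variable (X)

theorem kernelHom_shift (x : Kernel m X) :
    kernelHom m X (shift m X x) =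
      (FreeGroup.of none, 1) * kernelHom m X x * (FreeGroup.of none, 1)⁻¹ := by
  suffices h : (kernelHom m X).comp (shift m X).toMonoidHom =
      (MulAut.conj ((FreeGroup.of none, 1) : FreeGroup (Option X) × Multiplicative ℤ)
        ).toMonoidHom.comp (kernelHom m X) from
    DFunLike.congr_fun h x
  apply FreeGroup.ext_hom
  rintro (_ | ⟨j, i⟩)
  · change kernelHom m X (shift m X (aPow m X)) = MulAut.conj _ (kernelHom m X (aPow m X))
    rw [shift_aPow, kernelHom_aPow, MulAut.conj_apply]
    refine Prod.ext ?_ (by simp)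
    simp only [Prod.fst_mul, Prod.fst_inv]
    group
  · rw [MonoidHom.comp_apply, MonoidHom.comp_apply, MulEquiv.coe_toMonoidHom, ← gen_val,
      shift_gen, kernelHom_gen, kernelHom_gen, MulEquiv.coe_toMonoidHom, MulAut.conj_apply]
    refine Prod.ext ?_ (by simp)
    simp only [Prod.fst_mul, Prod.fst_inv]
    group

abbrev Torus := Kernel m X ⋊[zpowersHom (MulAut (Kernel m X)) (shift m X)] Multiplicative ℤ

noncomputable def torusHom : Torus m X →* FreeGroup (Option X) × Multiplicative ℤ :=
  SemidirectProduct.lift (kernelHom m X) (zpowersHom _ (FreeGroup.of none, 1)) fun z => by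
    refine MonoidHom.ext fun x => ?_
    exact (kernelHom m X).map_zpow_apply_of_map_apply (kernelHom_shift m X) (toAdd z) x

noncomputable def centerGen : Torus m X := inl (aPow m X)⁻¹ * inr (ofAdd (m : ℤ))

theorem commute_centerGen (g : Torus m X) : Commute g (centerGen m X) :=
  SemidirectProduct.commute_inl_inv_mul_inr (by rw [zpow_natCast, shift_pow_eq_conj])
    (shift_aPow m X) g

noncomputable def freeToTorus : FreeGroup (Option X) →* Torus m X :=
  FreeGroup.lift fun o => o.elim (inr (ofAdd 1)) fun i => inl (FreeGroup.of (some (0, i)))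

noncomputable def torusInv : FreeGroup (Option X) × Multiplicative ℤ →* Torus m X :=
  (freeToTorus m X).noncommCoprod (zpowersHom _ (centerGen m X)) fun _ n => by
    rw [zpowersHom_apply]
    exact (commute_centerGen m X _).zpow_right (toAdd n)

theorem torusHom_centerGen : torusHom m X (centerGen m X) = (1, ofAdd 1) := by
  ext <;> simp [torusHom, centerGen, kernelHom_aPow]

theorem torusHom_comp_freeToTorus : (torusHom m X).comp (freeToTorus m X) = MonoidHom.inl _ _ := by
  apply FreeGroup.ext_hom
  rintro (_ | i) <;> simp [torusHom, freeToTorus, kernelHom]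

theorem torusHom_torusInv (p : FreeGroup (Option X) × Multiplicative ℤ) :
    torusHom m X (torusInv m X p) = p := by
  obtain ⟨w, n⟩ := p
  rw [torusInv, MonoidHom.noncommCoprod_apply, map_mul, ← MonoidHom.comp_apply,
    torusHom_comp_freeToTorus, zpowersHom_apply, map_zpow, torusHom_centerGen]
  ext <;> simp

theorem inr_pow_mul_inl_mul_inv (k : ℕ) (x : Kernel m X) :
    (inr (ofAdd 1) ^ k * inl x * (inr (ofAdd 1) ^ k)⁻¹ : Torus m X) = inl ((shift m X ^ k) x) := by
  rw [← map_pow, ← map_inv, ← inl_aut, zpowersHom_apply, ← ofAdd_nsmul, toAdd_ofAdd, nsmul_one,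
    zpow_natCast]

theorem torusInv_comp_torusHom : (torusInv m X).comp (torusHom m X) = MonoidHom.id _ := by
  apply SemidirectProduct.hom_ext
  · apply FreeGroup.ext_hom
    rintro (_ | ⟨j, i⟩)
    · change torusInv m X (torusHom m X (inl (aPow m X))) = inl (aPow m X)
      rw [torusHom, lift_inl, kernelHom_aPow, torusInv, MonoidHom.noncommCoprod_apply, map_pow,
        freeToTorus, FreeGroup.lift_apply_of, Option.elim_none, ← map_pow, ← ofAdd_nsmul,
        nsmul_one, zpowersHom_apply, toAdd_ofAdd, zpow_neg_one, centerGen, mul_inv_rev, map_inv,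
        inv_inv, mul_inv_cancel_left]
    · simp only [MonoidHom.comp_apply, torusHom, lift_inl, kernelHom, FreeGroup.lift_apply_of]
      simp [torusInv, freeToTorus, inr_pow_mul_inl_mul_inv, ← gen_val, shift_pow_gen]
  · apply MonoidHom.ext_mint
    simp [torusHom, torusInv, freeToTorus]

noncomputable def torusEquiv : Torus m X ≃* FreeGroup (Option X) × Multiplicative ℤ :=
  (torusHom m X).toMulEquiv (torusInv m X) (torusInv_comp_torusHom m X)
    (MonoidHom.ext (torusHom_torusInv m X))

end CyclicCover

/-- For `m, M ≥ 2` and `N = m(M-1)+1` there is an automorphism `φ` of `F_N` such that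
`F_N ⋊_φ ℤ ≅ F_M × ℤ` and the image of `φ` in `Out(F_N)` has order `m`. -/
theorem stmt_13 (m M : ℕ) (hm : 2 ≤ m) (hM : 2 ≤ M) :
    ∃ φ : MulAut (FreeGroup (Fin (m * (M - 1) + 1))),
      Nonempty
          ((FreeGroup (Fin (m * (M - 1) + 1))
              ⋊[zpowersHom (MulAut (FreeGroup (Fin (m * (M - 1) + 1)))) φ]
                Multiplicative ℤ) ≃*
            (FreeGroup (Fin M) × Multiplicative ℤ)) ∧
        (∃ x : FreeGroup (Fin (m * (M - 1) + 1)), φ ^ m = MulAut.conj x) ∧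
        ∀ k : ℕ, 0 < k → k < m →
          ∀ x : FreeGroup (Fin (m * (M - 1) + 1)), φ ^ k ≠ MulAut.conj x := by
  have : NeZero m := ⟨by omega⟩
  have : Nonempty (Fin (M - 1)) := ⟨⟨0, by omega⟩⟩
  let c : CyclicCover.Kernel m (Fin (M - 1)) ≃* FreeGroup (Fin (m * (M - 1) + 1)) :=
    FreeGroup.freeGroupCongr
      ((Equiv.optionCongr finProdFinEquiv).trans (finSuccEquiv _).symm)
  let e : FreeGroup (Option (Fin (M - 1))) ≃* FreeGroup (Fin M) :=
    FreeGroup.freeGroupCongr ((finSuccEquiv (M - 1)).symm.trans (finCongr (by omega)))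
  refine ⟨MulAut.congr c (CyclicCover.shift m _), ⟨?_⟩, ⟨c (CyclicCover.aPow m _), ?_⟩,
    fun k hk₀ hk x h => ?_⟩
  · exact (SemidirectProduct.zpowersCongr c _).symm.trans
      ((CyclicCover.torusEquiv m _).trans (e.prodCongr (MulEquiv.refl _)))
  · rw [← map_pow, CyclicCover.shift_pow_eq_conj, MulAut.congr_conj]
  · refine CyclicCover.shift_pow_ne_conj m hk₀ hk (c.symm x) ?_
    rwa [← (MulAut.congr c).injective.eq_iff, map_pow, MulAut.congr_conj, c.apply_symm_apply]
end

section
/- Let G = ⟨(⊕_{i=1}^m Sym(r)) ⋊ D_{2m}⟩ × (ℤ/2) where D_{2m} acts on ⊕_{i=1}^m Sym(r) by permuting coordinates via its natural action on ℤ/m. Let α = ((σ,…,σ), ρ, 0) where σ ∈ Sym(r) is an r-cycle and ρ ∈ D_{2m} is the rotation of order m. Then for j coprime to mr, α is conjugate to α^j in G if and only if j ≡ ±1 mod m. -/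
/-- The automorphism of `ι → M` permuting the coordinates by `e`. -/
def permAut {ι M : Type*} [Group M] (e : Equiv.Perm ι) : MulAut (ι → M) where
  toFun x := x ∘ e.symm
  invFun x := x ∘ e
  left_inv x := by funext i; simp
  right_inv x := by funext i; simp
  map_mul' x y := rfl

/-- The homomorphism `Perm ι → Aut(ι → M)` permuting coordinates. -/
def permHom (ι M : Type*) [Group M] : Equiv.Perm ι →* MulAut (ι → M) where
  toFun := permAut
  map_one' := by
    ext x i
    rfl
  map_mul' e f := by
    ext x i
    rfl

/-- The natural action of the dihedral group `D_{2m}` on `ℤ/m`. -/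
def dihPerm (m : ℕ) : DihedralGroup m →* Equiv.Perm (ZMod m) where
  toFun d :=
    match d with
    | .r i => Equiv.subRight i
    | .sr i => Equiv.subLeft i
  map_one' := by
    rw [DihedralGroup.one_def]
    ext x
    simp
  map_mul' a b := by
    rcases a with i | i <;> rcases b with j | j <;>
      · ext x
        simp [DihedralGroup.r_mul_r, DihedralGroup.r_mul_sr, DihedralGroup.sr_mul_r,
          DihedralGroup.sr_mul_sr, sub_sub]
        ring

/-- The group `G = ((⊕_{ℤ/m} Sym(r)) ⋊ D_{2m}) × ℤ/2`, with `D_{2m}` permuting the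
coordinates of the direct sum via its natural action on `ℤ/m`. -/
abbrev BigG (m r : ℕ) : Type :=
  ((ZMod m → Equiv.Perm (Fin r))
      ⋊[(permHom (ZMod m) (Equiv.Perm (Fin r))).comp (dihPerm m)] DihedralGroup m) ×
    Multiplicative (ZMod 2)

/-- The element `α = ((σ,…,σ), ρ, 0)` of `BigG m r`. -/
def alphaElem (m r : ℕ) (σ : Equiv.Perm (Fin r)) : BigG m r :=
  (⟨fun _ => σ, DihedralGroup.r 1⟩, 1)

lemma r_inv' (m : ℕ) (i : ZMod m) :
    (DihedralGroup.r i : DihedralGroup m)⁻¹ = DihedralGroup.r (-i) := rfl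

lemma r_one_zpow (m : ℕ) (j : ℤ) :
    (DihedralGroup.r 1 : DihedralGroup m) ^ j = DihedralGroup.r (j : ZMod m) := by
  cases j with
  | ofNat n => simp [Int.ofNat_eq_natCast, zpow_natCast]
  | negSucc n =>
      rw [zpow_negSucc, DihedralGroup.r_one_pow, r_inv']
      congr 1
      push_cast
      ring

lemma r_conj (m : ℕ) (k : ZMod m)
    (h : IsConj (DihedralGroup.r 1 : DihedralGroup m) (DihedralGroup.r k)) :
    k = 1 ∨ k = -1 := by
  obtain ⟨c, hc⟩ := isConj_iff.mp h
  rcases c with i | i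
  · left
    have hinv : (DihedralGroup.r i : DihedralGroup m)⁻¹ = DihedralGroup.r (-i) := rfl
    rw [hinv] at hc
    simp only [DihedralGroup.r_mul_r, DihedralGroup.r.injEq] at hc
    linear_combination -hc
  · right
    have hinv : (DihedralGroup.sr i : DihedralGroup m)⁻¹ = DihedralGroup.sr i := rfl
    rw [hinv] at hc
    simp only [DihedralGroup.sr_mul_r, DihedralGroup.sr_mul_sr, DihedralGroup.r.injEq] at hc
    linear_combination -hc

lemma phi_const (m r : ℕ) (d : DihedralGroup m) (s : Equiv.Perm (Fin r)) :
    ((permHom (ZMod m) (Equiv.Perm (Fin r))).comp (dihPerm m)) d (fun _ => s) = fun _ => s := rfl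

/-- The constant-tuple homomorphism into `BigG`. -/
def FHom (m r : ℕ) : Equiv.Perm (Fin r) × DihedralGroup m →* BigG m r where
  toFun p := (⟨fun _ => p.1, p.2⟩, 1)
  map_one' := rfl
  map_mul' p q := rfl

lemma alphaElem_zpow (m r : ℕ) (σ : Equiv.Perm (Fin r)) (j : ℤ) :
    alphaElem m r σ ^ j =
      (⟨fun _ => σ ^ j, DihedralGroup.r (j : ZMod m)⟩, 1) := by
  have h0 : alphaElem m r σ = FHom m r (σ, DihedralGroup.r 1) := rfl
  rw [h0, ← map_zpow]
  have h1 : (σ, (DihedralGroup.r 1 : DihedralGroup m)) ^ j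
      = (σ ^ j, DihedralGroup.r (j : ZMod m)) := by
    rw [Prod.ext_iff]
    constructor
    · simp
    · simp [r_one_zpow]
  rw [h1]
  rfl

/-- For `σ` an `r`-cycle and `j` coprime to `mr`, the element `α = ((σ,…,σ), ρ, 0)` is
conjugate to `α^j` in `G = ((⊕_{ℤ/m} Sym(r)) ⋊ D_{2m}) × ℤ/2` iff `j ≡ ±1 (mod m)`. -/
theorem stmt_17 (m r : ℕ) (hm : 5 ≤ m) (hmodd : Odd m) (hr : 1 < r)
    (hcop : Nat.Coprime m r) (σ : Equiv.Perm (Fin r))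
    (hσc : σ.IsCycle) (hσs : σ.support.card = r)
    (j : ℤ) (hj : IsCoprime j ((m * r : ℕ) : ℤ)) :
    IsConj (alphaElem m r σ) (alphaElem m r σ ^ j) ↔
      ((j : ZMod m) = 1 ∨ (j : ZMod m) = -1) := by
  constructor
  · intro h
    set π : BigG m r →* DihedralGroup m :=
      SemidirectProduct.rightHom.comp (MonoidHom.fst _ _) with hπ
    have h2 := π.map_isConj h
    rw [map_zpow] at h2
    have h3 : π (alphaElem m r σ) = DihedralGroup.r 1 := rfl
    rw [h3, r_one_zpow] at h2
    exact r_conj m _ h2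
  · intro hk
    -- facts about σ ^ j
    have hord : orderOf σ = r := by rw [hσc.orderOf, hσs]
    have hr0 : (0:ℤ) < (r:ℤ) := by exact_mod_cast lt_trans Nat.zero_lt_one hr
    set n : ℕ := (j % (r:ℤ)).toNat with hn
    have hjn : (n : ℤ) = j % (r:ℤ) :=
      Int.toNat_of_nonneg (Int.emod_nonneg j (ne_of_gt hr0))
    have hσj : σ ^ j = σ ^ n := by
      calc σ ^ j = σ ^ (j % ((orderOf σ : ℕ) : ℤ)) := (zpow_mod_orderOf σ j).symm
        _ = σ ^ ((n : ℤ)) := by rw [hord, hjn]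
        _ = σ ^ n := zpow_natCast σ n
    have hcopjr : IsCoprime j (r:ℤ) := by
      refine IsCoprime.of_isCoprime_of_dvd_right hj ?_
      push_cast
      exact Dvd.intro_left _ rfl
    have hcopn : Nat.Coprime n r := by
      have h1 : IsCoprime ((n:ℤ)) ((r:ℤ)) := by
        rw [hjn, Int.emod_def]
        have := hcopjr.add_mul_left_left (-(j / (r:ℤ)))
        rw [sub_eq_add_neg, ← mul_neg]
        exact this
      rwa [Int.isCoprime_iff_gcd_eq_one, Int.gcd_natCast_natCast] at h1
    have hcyc : (σ ^ n).IsCycle := hσc.pow_iff.mpr (by rwa [hord])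
    have hsupp : (σ ^ n).support = σ.support :=
      Equiv.Perm.support_pow_coprime (by rwa [hord])
    have hconj : IsConj σ (σ ^ n) := hσc.isConj hcyc (by rw [hsupp])
    obtain ⟨τ, hτ⟩ := isConj_iff.mp hconj
    have hτ' : τ * σ = σ ^ n * τ := by rw [← hτ]; group
    rcases hk with hk | hk
    · rw [isConj_iff]
      refine ⟨(⟨fun _ => τ, 1⟩, 1), ?_⟩
      rw [mul_inv_eq_iff_eq_mul, alphaElem_zpow]
      refine Prod.ext ?_ rfl
      refine SemidirectProduct.ext ?_ ?_
      · show ((fun _ => τ) * _) = ((fun _ => σ ^ j) * _)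
        rw [map_one]
        show ((fun (_ : ZMod m) => τ) * (fun _ => σ)) = ((fun _ => σ ^ j) * (fun _ => τ))
        funext i
        show τ * σ = σ ^ j * τ
        rw [hσj, hτ']
      · show (1 : DihedralGroup m) * DihedralGroup.r 1 = DihedralGroup.r ((j : ZMod m)) * 1
        rw [one_mul, mul_one, hk]
    · rw [isConj_iff]
      refine ⟨(⟨fun _ => τ, DihedralGroup.sr 0⟩, 1), ?_⟩
      rw [mul_inv_eq_iff_eq_mul, alphaElem_zpow]
      refine Prod.ext ?_ rfl
      refine SemidirectProduct.ext ?_ ?_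
      · show ((fun (_ : ZMod m) => τ) * (fun _ => σ)) = ((fun _ => σ ^ j) * (fun _ => τ))
        funext i
        show τ * σ = σ ^ j * τ
        rw [hσj, hτ']
      · show DihedralGroup.sr 0 * DihedralGroup.r 1
            = DihedralGroup.r ((j : ZMod m)) * DihedralGroup.sr 0
        rw [DihedralGroup.sr_mul_r, DihedralGroup.r_mul_sr, hk]
        norm_num
end
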